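/- Suppose ψ : ℝ → ℝ ∪ {+∞} is convex, nonincreasing, bounded below by 0 with ψ(x) → 0 as x → +∞, and satisfies ψ(y + τx)/τ → +∞ as τ → +∞ for every y ∈ ℝ and x < 0. Let g : H → ℝ be measurable on a bounded set H ⊆ ℝ^d of finite positive Lebesgue measure, and let y be in the domain of ψ. If the set E⁻ = {x ∈ H : g(x) < 0} has positive Lebesgue measure, then ∫_H ψ(y + τ g(x))/τ dx → +∞ as τ → +∞. -/

import Mathlib

open MeasureTheory Filter
open scoped ENNReal Topology

/-- Coercivity step in the existence proof: if `ψ : ℝ → [0, ∞]` is convex,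
nonincreasing, tends to `0` at `+∞`, and satisfies `ψ(y + τx)/τ → ∞` as
`τ → ∞` for every `x < 0`, and if `g` is negative on a set of positive measure
inside a bounded `H` of finite positive measure, then
`∫_H ψ(y + τ g(x))/τ dx → ∞` as `τ → ∞`. -/
theorem coercivity_integral_tendsto_top (d : ℕ)
    (ψ : ℝ → ℝ≥0∞)
    (hψconv : ∀ (x y a b : ℝ), 0 ≤ a → 0 ≤ b → a + b = 1 →
      ψ (a * x + b * y) ≤ ENNReal.ofReal a * ψ x + ENNReal.ofReal b * ψ y)
    (hψmono : Antitone ψ)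
    (hψ0 : Tendsto ψ atTop (𝓝 0))
    (hψcoer : ∀ (y x : ℝ), x < 0 →
      Tendsto (fun τ : ℝ => ψ (y + τ * x) / ENNReal.ofReal τ) atTop (𝓝 ⊤))
    (H : Set (EuclideanSpace ℝ (Fin d))) (hHb : Bornology.IsBounded H)
    (hHmeas : MeasurableSet H) (hHpos : 0 < volume H) (hHfin : volume H < ⊤)
    (g : EuclideanSpace ℝ (Fin d) → ℝ) (hg : Measurable g)
    (y : ℝ) (hy : ψ y ≠ ⊤)
    (hEneg : 0 < volume {x ∈ H | g x < 0}) :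
    Tendsto (fun τ : ℝ => ∫⁻ x in H, ψ (y + τ * g x) / ENNReal.ofReal τ)
      atTop (𝓝 ⊤) := by
  have hψmeas : Measurable ψ := hψmono.measurable
  rw [tendsto_iff_seq_tendsto]
  intro τ hτ
  set E : Set (EuclideanSpace ℝ (Fin d)) := {x ∈ H | g x < 0} with hE
  have hEsub : E ⊆ H := fun x hx => hx.1
  -- the functions
  set f : ℕ → EuclideanSpace ℝ (Fin d) → ℝ≥0∞ :=
    fun n x => ψ (y + τ n * g x) / ENNReal.ofReal (τ n) with hf
  have hfmeas : ∀ n, Measurable (f n) := by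
    intro n
    exact (hψmeas.comp (measurable_const.add (measurable_const.mul hg))).div
      measurable_const
  -- pointwise divergence on E
  have hpt : ∀ x ∈ E, Tendsto (fun n => f n x) atTop (𝓝 ⊤) := by
    intro x hx
    exact (hψcoer y (g x) hx.2).comp hτ
  -- liminf is ⊤ on E
  have hliminf : ∀ x ∈ E, Filter.liminf (fun n => f n x) atTop = ⊤ :=
    fun x hx => (hpt x hx).liminf_eq
  -- Fatou
  have fatou : ∫⁻ x in H, Filter.liminf (fun n => f n x) atTop ≤
      Filter.liminf (fun n => ∫⁻ x in H, f n x) atTop :=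
    lintegral_liminf_le hfmeas
  have hEmeas : MeasurableSet E := hHmeas.inter (hg measurableSet_Iio)
  have htop : ∫⁻ x in H, Filter.liminf (fun n => f n x) atTop = ⊤ := by
    rw [eq_top_iff]
    calc (⊤ : ℝ≥0∞) = ⊤ * volume E := by
          rw [ENNReal.top_mul hEneg.ne']
      _ = ∫⁻ _ in E, (⊤ : ℝ≥0∞) := by
          rw [setLIntegral_const]
      _ = ∫⁻ x in E, Filter.liminf (fun n => f n x) atTop := by
          refine (setLIntegral_congr_fun hEmeas ?_).symm
          exact fun x hx => hliminf x hx
      _ ≤ ∫⁻ x in H, Filter.liminf (fun n => f n x) atTop :=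
          lintegral_mono_set hEsub
  have hliminfH : Filter.liminf (fun n => ∫⁻ x in H, f n x) atTop = ⊤ :=
    top_unique (htop ▸ fatou)
  have hlimsupH : Filter.limsup (fun n => ∫⁻ x in H, f n x) atTop = ⊤ :=
    top_unique (hliminfH ▸ liminf_le_limsup)
  have := tendsto_of_liminf_eq_limsup hliminfH hlimsupH
  exact this
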